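/- Let V be a finite-dimensional real inner product space and let η : V → so(V) be a linear map such that the trilinear form (X,Y,Z) ↦ ⟨η(X)Y, Z⟩ is alternating in all three arguments. Define (η²)(X,Y)Z := [η(X), η(Y)]Z − η(η(X)Y − η(Y)X)Z and η²(X,Y)Z := η(Z)(η(X)Y). Then for all X, Y, Z ∈ V: (1) (η²)(X,Y)Z = η²(X,Y)Z + (b₁η²)(X,Y,Z), where (b₁η²)(X,Y,Z) := η²(X,Y)Z + η²(Y,Z)X + η²(Z,X)Y; and (2) (b₁η²)(X,Y,Z) = η(X)(η(Y)Z) − η(η(X)Y)Z − η(Y)(η(X)Z). -/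
import Mathlib


open scoped RealInnerProductSpace

noncomputable section

/-- `(η²)(X,Y)Z := [η(X), η(Y)]Z − η(η(X)Y − η(Y)X)Z`. -/
def etaSqBracket {V : Type*} [NormedAddCommGroup V] [InnerProductSpace ℝ V]
    (η : V →ₗ[ℝ] Module.End ℝ V) : V → V → V → V :=
  fun X Y Z => (⁅η X, η Y⁆ : Module.End ℝ V) Z - η (η X Y - η Y X) Z

/-- `η²(X,Y)Z := η(Z)(η(X)Y)`. -/
def etaSq {V : Type*} [NormedAddCommGroup V] [InnerProductSpace ℝ V]
    (η : V →ₗ[ℝ] Module.End ℝ V) : V → V → V → V :=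
  fun X Y Z => η Z (η X Y)

/-- `(b₁η²)(X,Y,Z) := η²(X,Y)Z + η²(Y,Z)X + η²(Z,X)Y`. -/
def b1EtaSq {V : Type*} [NormedAddCommGroup V] [InnerProductSpace ℝ V]
    (η : V →ₗ[ℝ] Module.End ℝ V) : V → V → V → V :=
  fun X Y Z => etaSq η X Y Z + etaSq η Y Z X + etaSq η Z X Y

/-- For a linear map `η : V → so(V)` whose associated trilinear form
`(X,Y,Z) ↦ ⟪η(X)Y, Z⟫` is alternating in all three arguments, one has
`(η²) = η² + b₁η²` and `(b₁η²)(X,Y,Z) = η(X)(η(Y)Z) − η(η(X)Y)Z − η(Y)(η(X)Z)`. -/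
theorem etaSq_identities
    {V : Type*} [NormedAddCommGroup V] [InnerProductSpace ℝ V] [FiniteDimensional ℝ V]
    (η : V →ₗ[ℝ] Module.End ℝ V)
    (halt : ∀ X Y Z : V, ⟪η X Y, Z⟫ = -⟪η Y X, Z⟫ ∧ ⟪η X Y, Z⟫ = -⟪η X Z, Y⟫) :
    ∀ X Y Z : V,
      etaSqBracket η X Y Z = etaSq η X Y Z + b1EtaSq η X Y Z ∧
      b1EtaSq η X Y Z = η X (η Y Z) - η (η X Y) Z - η Y (η X Z) := by
  have skew : ∀ A B : V, η A B = -η B A := by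
    intro A B
    apply ext_inner_right ℝ
    intro Z
    simpa [inner_neg_left] using (halt A B Z).1
  intro X Y Z
  have h2 : b1EtaSq η X Y Z = η X (η Y Z) - η (η X Y) Z - η Y (η X Z) := by
    simp only [b1EtaSq, etaSq]
    rw [skew Z (η X Y), skew Z X, map_neg]
    abel
  refine ⟨?_, h2⟩
  rw [h2]
  simp only [etaSqBracket, etaSq, Ring.lie_def, LinearMap.sub_apply, Module.End.mul_apply]
  rw [skew Y X, skew Z (η X Y)]
  simp only [map_neg, map_sub, LinearMap.sub_apply, LinearMap.neg_apply]
  abel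

end
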